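/- arXiv:1503.06887 — 4 statements merged into one kernel-verified Lean document; each statement's English description precedes it below -/
import Mathlib

section
/- For n ≥ 0 let M_n be the linear operator on real-valued functions on ZMod (2^n) defined by (M_n φ)(y) = (φ(1 − y) + φ(−y))/2. Then M_n has exactly 2^n distinct real eigenvalues, and its set of eigenvalues equals {1} ∪ {λ ∈ ℝ : ∃ i < n, f^[i](2λ) = 0}, where f : ℝ → ℝ is f(x) = x² − 2 and f^[i] denotes the i-fold iterate of f (f^[0] = id). -/
/-!
The reflections `y ↦ 1 - y` and `y ↦ -y` of `ℤ` act on the waves `ψ_θ(x) = cos (θ (2x - 1/2))`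
by `ψ_θ(1 - x) + ψ_θ(-x) = 2 cos θ · ψ_θ(x)`. For `θ = π j / N` the wave is `N`-periodic, so it
descends to an eigenfunction of `M` on `ℤ/Nℤ` with eigenvalue `cos (π j / N)`; for `0 ≤ j < N`
these are `N` distinct numbers, hence the whole spectrum.

For `N = 2ⁿ`, the Chebyshev identity `f^[i] (2 cos t) = 2 cos (2ⁱ t)` shows that the roots of
`f^[i] (2x)` are the `cos (π (2k+1) / 2^(i+1))`, `k < 2ⁱ`; writing `j = (2k+1) 2^e` matches them
with the eigenvalues `cos (π j / 2ⁿ)`, `j ≠ 0`, while `j = 0` gives the eigenvalue `1`.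
-/

open Real Function Set

theorem Module.End.setOf_hasEigenvalue_eq_range {K V ι : Type*} [Field K] [AddCommGroup V]
    [Module K V] [FiniteDimensional K V] [Fintype ι] (f : End K V) {μ : ι → K} {v : ι → V}
    (hμ : Function.Injective μ) (hv : ∀ i, f.HasEigenvector (μ i) (v i))
    (hdim : Module.finrank K V ≤ Fintype.card ι) :
    {a | f.HasEigenvalue a} = range μ := by
  refine Subset.antisymm (fun a ha => ?_)
    (range_subset_iff.2 fun i => hasEigenvalue_of_hasEigenvector (hv i))
  by_contra ha'
  obtain ⟨w, hw⟩ := ha.exists_hasEigenvector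
  have hind := f.eigenvectors_linearIndependent' (Option.elim' a μ)
    (Option.injective_iff.2 ⟨hμ, ha'⟩) (Option.elim' w v) (Option.rec hw hv)
  have hcard := hind.fintype_card_le_finrank
  rw [Fintype.card_option] at hcard
  omega

theorem Function.Periodic.apply_val_intCast {α : Type*} {f : ℤ → α} {N : ℕ} [NeZero N]
    (hf : Periodic f N) (x : ℤ) : f ((x : ZMod N).val) = f x := by
  rw [ZMod.val_intCast, Int.emod_def, mul_comm, ← smul_eq_mul, hf.sub_zsmul_eq]

theorem injective_cos_pi_mul_div (N : ℕ) : Injective fun j : Fin N => cos (π * j / N) := by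
  have hmem (j : Fin N) : π * j / N ∈ Icc 0 π := by
    exact ⟨by positivity, div_le_of_le_mul₀ (by positivity) pi_pos.le
      (mul_le_mul_of_nonneg_left (by exact_mod_cast j.2.le) pi_pos.le)⟩
  intro a b hab
  have h := injOn_cos (hmem a) (hmem b) hab
  have hN : (N : ℝ) ≠ 0 := by exact_mod_cast (Fin.pos a).ne'
  field_simp at h
  exact Fin.ext (by exact_mod_cast h)

section Dihedral

noncomputable def cosWave (θ : ℝ) (x : ℤ) : ℝ := cos (θ * (2 * x - 1 / 2))

theorem cosWave_one_sub_add_cosWave_neg (θ : ℝ) (x : ℤ) :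
    cosWave θ (1 - x) + cosWave θ (-x) = 2 * cos θ * cosWave θ x := by
  simp only [cosWave, Int.cast_sub, Int.cast_one, Int.cast_neg]
  rw [show θ * (2 * (1 - x) - 1 / 2) = θ - θ * (2 * x - 1 / 2) by ring,
    show θ * (2 * -x - 1 / 2) = -(θ + θ * (2 * x - 1 / 2)) by ring, cos_neg, cos_sub, cos_add]
  ring

theorem cosWave_periodic (N j : ℕ) : Periodic (cosWave (π * j / N)) N := by
  intro x
  rcases eq_or_ne N 0 with rfl | hN
  · simp
  have hN' : (N : ℝ) ≠ 0 := by exact_mod_cast hN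
  simp only [cosWave, Int.cast_add, Int.cast_natCast]
  rw [show π * j / N * (2 * (x + N) - 1 / 2) = π * j / N * (2 * x - 1 / 2) + (j : ℤ) * (2 * π) by
    push_cast; field_simp; ring, cos_add_int_mul_two_pi]

variable {N : ℕ} [NeZero N] (M : Module.End ℝ (ZMod N → ℝ))
  (hM : ∀ (φ : ZMod N → ℝ) (y : ZMod N), M φ y = (φ (1 - y) + φ (-y)) / 2)
include hM

theorem hasEigenvector_cosWave {j : ℕ} (hj : j < N) :
    M.HasEigenvector (cos (π * j / N)) fun y : ZMod N => cosWave (π * j / N) y.val := by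
  have hper := cosWave_periodic N j
  refine ⟨Module.End.mem_eigenspace_iff.2 (funext fun y => ?_), fun h => ?_⟩
  · have h1 : 1 - y = ((1 - y.val : ℤ) : ZMod N) := by simp
    have h2 : -y = ((-y.val : ℤ) : ZMod N) := by simp
    rw [hM, Pi.smul_apply, smul_eq_mul, h1, h2, hper.apply_val_intCast, hper.apply_val_intCast,
      cosWave_one_sub_add_cosWave_neg]
    ring
  · have h0 := congrFun h 0
    simp only [ZMod.val_zero, cosWave, Nat.cast_zero, Int.cast_zero, Pi.zero_apply] at h0
    rw [show π * j / N * (2 * 0 - 1 / 2) = -(π * j / N / 2) by ring, cos_neg] at h0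
    have hθ : 0 ≤ π * j / N := by positivity
    have hθπ : π * j / N < π := by
      rw [div_lt_iff₀ (by exact_mod_cast (NeZero.pos N))]
      exact mul_lt_mul_of_pos_left (by exact_mod_cast hj) pi_pos
    exact (cos_pos_of_mem_Ioo ⟨by linarith [pi_pos], by linarith⟩).ne' h0

theorem setOf_hasEigenvalue_eq_range_cos :
    {μ : ℝ | M.HasEigenvalue μ} = range fun j : Fin N => cos (π * j / N) :=
  M.setOf_hasEigenvalue_eq_range (injective_cos_pi_mul_div N)
    (fun j => hasEigenvector_cosWave M hM j.2) (by simp [ZMod.card])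

end Dihedral

theorem iterate_sq_sub_two_two_mul_cos (i : ℕ) (t : ℝ) :
    (fun x : ℝ => x ^ 2 - 2)^[i] (2 * cos t) = 2 * cos (2 ^ i * t) := by
  induction i generalizing t with
  | zero => simp
  | succ i ih =>
    rw [iterate_succ_apply, show (2 * cos t) ^ 2 - 2 = 2 * cos (2 * t) by rw [cos_two_mul]; ring,
      ih, pow_succ, mul_assoc]

theorem mapsTo_sq_sub_two : MapsTo (fun x : ℝ => x ^ 2 - 2) {x | 2 < |x|} {x | 2 < |x|} := by
  intro x hx
  simp only [mem_ofPred_eq] at hx ⊢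
  have : 4 < x ^ 2 := by nlinarith [sq_abs x, abs_nonneg x]
  rw [abs_of_pos (by linarith)]
  linarith

theorem iterate_sq_sub_two_two_mul_eq_zero_iff {i : ℕ} {μ : ℝ} :
    (fun x : ℝ => x ^ 2 - 2)^[i] (2 * μ) = 0 ↔
      ∃ k : ℕ, k < 2 ^ i ∧ μ = cos (π * (2 * k + 1) / 2 ^ (i + 1)) := by
  constructor
  · intro h
    have hμ : |2 * μ| ≤ 2 := by
      by_contra! hlt
      have := mapsTo_sq_sub_two.iterate i hlt
      norm_num [h] at this
    obtain ⟨hμ1, hμ2⟩ := abs_le.1 hμ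
    have hct : cos (arccos μ) = μ := cos_arccos (by linarith) (by linarith)
    rw [← hct, iterate_sq_sub_two_two_mul_cos] at h
    obtain ⟨k, hk⟩ := cos_eq_zero_iff.1 (by linarith : cos (2 ^ i * arccos μ) = 0)
    have ht0 := arccos_nonneg μ
    have htπ := arccos_le_pi μ
    have h2i : (0 : ℝ) < 2 ^ i := by positivity
    have hk0 : (-1 : ℝ) < k := by nlinarith [pi_pos]
    have hk1 : (k : ℝ) < 2 ^ i := by nlinarith [pi_pos]
    lift k to ℕ using by exact_mod_cast hk0
    refine ⟨k, by exact_mod_cast hk1, ?_⟩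
    rw [← hct]
    congr 1
    push_cast at hk ⊢
    field_simp
    linear_combination 2 * hk
  · rintro ⟨k, -, rfl⟩
    rw [iterate_sq_sub_two_two_mul_cos, cos_eq_zero_iff.2 ⟨k, ?_⟩, mul_zero]
    field_simp
    push_cast
    ring

theorem Nat.exists_eq_odd_mul_two_pow {j n : ℕ} (hj0 : j ≠ 0) (hj : j < 2 ^ n) :
    ∃ i e k, n = i + e + 1 ∧ k < 2 ^ i ∧ j = (2 * k + 1) * 2 ^ e := by
  obtain ⟨e, m, ⟨k, rfl⟩, rfl⟩ := Nat.exists_eq_two_pow_mul_odd hj0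
  have he : e < n := (Nat.pow_lt_pow_iff_right (by norm_num)).1
    (lt_of_le_of_lt (Nat.le_mul_of_pos_right _ (by omega)) hj)
  obtain ⟨i, rfl⟩ := Nat.exists_eq_add_of_lt he
  have hk : 2 * k + 1 < 2 ^ (i + 1) := by
    rw [show e + i + 1 = e + (i + 1) by ring, pow_add] at hj
    exact Nat.lt_of_mul_lt_mul_left hj
  exact ⟨i, e, k, by ring, by omega, by ring⟩

theorem range_cos_pi_mul_div_two_pow (n : ℕ) :
    range (fun j : Fin (2 ^ n) => cos (π * j / 2 ^ n)) =
      {1} ∪ {μ : ℝ | ∃ i < n, (fun x : ℝ => x ^ 2 - 2)^[i] (2 * μ) = 0} := by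
  have harg (i e k : ℕ) :
      π * ((2 * k + 1) * 2 ^ e : ℕ) / 2 ^ (i + e + 1) = π * (2 * k + 1) / 2 ^ (i + 1) := by
    rw [show i + e + 1 = i + 1 + e by ring, pow_add]
    push_cast
    field_simp
  ext μ
  simp only [mem_range, mem_union, mem_singleton_iff, mem_ofPred_eq,
    iterate_sq_sub_two_two_mul_eq_zero_iff]
  constructor
  · rintro ⟨j, rfl⟩
    rcases eq_or_ne (j : ℕ) 0 with hj | hj
    · simp [hj]
    obtain ⟨i, e, k, rfl, hk, hjk⟩ := Nat.exists_eq_odd_mul_two_pow hj j.2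
    exact Or.inr ⟨i, by omega, k, hk, by rw [hjk, harg]⟩
  · rintro (rfl | ⟨i, hi, k, hk, rfl⟩)
    · exact ⟨⟨0, Nat.two_pow_pos n⟩, by simp⟩
    obtain ⟨e, rfl⟩ := Nat.exists_eq_add_of_lt hi
    have hj : (2 * k + 1) * 2 ^ e < 2 ^ (i + e + 1) := by
      rw [show i + e + 1 = i + 1 + e by ring, pow_add]
      exact Nat.mul_lt_mul_of_pos_right (by omega) (by positivity)
    exact ⟨⟨_, hj⟩, congrArg cos (harg i e k)⟩

/-- The random walk operator `M_n` of the Schreier graph of the action of the infinite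
dihedral group on `ℤ/2ⁿℤ` (where the generators act by `y ↦ 1 − y` and `y ↦ −y`) has exactly
`2ⁿ` distinct real eigenvalues, and its set of eigenvalues equals
`{1} ∪ {λ | ∃ i < n, f^[i](2λ) = 0}` where `f(x) = x² − 2`. -/
theorem dihedral_level_spectrum (n : ℕ)
    (M : (ZMod (2 ^ n) → ℝ) →ₗ[ℝ] (ZMod (2 ^ n) → ℝ))
    (hM : ∀ (φ : ZMod (2 ^ n) → ℝ) (y : ZMod (2 ^ n)),
      M φ y = (φ (1 - y) + φ (-y)) / 2) :
    {μ : ℝ | Module.End.HasEigenvalue M μ}.ncard = 2 ^ n ∧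
    {μ : ℝ | Module.End.HasEigenvalue M μ} =
      {1} ∪ {μ : ℝ | ∃ i < n, (fun x : ℝ => x ^ 2 - 2)^[i] (2 * μ) = 0} := by
  rw [setOf_hasEigenvalue_eq_range_cos M hM]
  refine ⟨by rw [ncard_range_of_injective (injective_cos_pi_mul_div _), Nat.card_fin], ?_⟩
  simpa only [Nat.cast_pow, Nat.cast_ofNat] using range_cos_pi_mul_div_two_pow n
end

section
/- Let M be the bounded linear operator on the real Hilbert space ℓ²(ℤ) defined by (M f)(n) = (f(1 − n) + f(−n))/2. Then M is self-adjoint and its spectrum over ℝ equals the interval [−1, 1]. -/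
/-!
The Schreier graph is the path `0, 1, -1, 2, -2, …` with a loop at `0`, and `M` is the average of
the two reflections `f ↦ f ∘ (1 - ·)` and `f ↦ f ∘ (- ·)` of `ℓ²(ℤ)`. These are involutive
isometries, hence self-adjoint, so `M` is self-adjoint of norm at most `1` and its spectrum lies
in `[-1, 1]`. Conversely, for `λ = cos θ` the standing wave `n ↦ cos ((2n - 1/2) θ)` solves
`M φ = λ φ` pointwise; its truncations to `[-k, k]` have residual supported at the two boundary
points `-k` and `k + 1`, while their norms grow like `√k` as long as `|λ| < 1`. So every
`λ ∈ (-1, 1)` is an approximate eigenvalue, and the spectrum, being closed, contains `[-1, 1]`.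
-/

open Filter Real
open scoped ENNReal

noncomputable section

section Reindex

variable {α β E : Type*} [NormedAddCommGroup E] {p : ℝ≥0∞}

theorem Memℓp.comp_equiv {f : β → E} (hf : Memℓp f p) (e : α ≃ β) : Memℓp (f ∘ e) p := by
  rcases p.trichotomy with rfl | rfl | hp
  · exact memℓp_zero (hf.finite_dsupport.preimage e.injective.injOn)
  · exact memℓp_infty ((e.surjective.range_comp (fun b => ‖f b‖)).symm ▸ hf.bddAbove)
  · exact memℓp_gen (e.summable_iff.2 (hf.summable hp))

variable (𝕜 : Type*) [NormedField 𝕜] [NormedSpace 𝕜 E] [Fact (1 ≤ p)]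

def lp.compEquiv (e : α ≃ β) : lp (fun _ : β => E) p →ₗᵢ[𝕜] lp (fun _ : α => E) p where
  toFun f := ⟨f ∘ e, (lp.memℓp f).comp_equiv e⟩
  map_add' _ _ := rfl
  map_smul' _ _ := rfl
  norm_map' f := by
    rcases p.trichotomy with rfl | rfl | hp
    · exact absurd (Fact.out : (1 : ℝ≥0∞) ≤ 0) (by norm_num)
    · exact e.iSup_comp (g := fun b => ‖f b‖)
    · simp only [lp.norm_eq_tsum_rpow hp]
      exact congrArg (· ^ _) (e.tsum_eq (fun b => ‖f b‖ ^ p.toReal))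

@[simp]
theorem lp.compEquiv_apply (e : α ≃ β) (f : lp (fun _ : β => E) p) (a : α) :
    lp.compEquiv 𝕜 e f a = f (e a) := rfl

theorem lp.compEquiv_involutive {e : α ≃ α} (he : Function.Involutive e) :
    Function.Involutive (lp.compEquiv 𝕜 e : lp (fun _ : α => E) p →ₗᵢ[𝕜] _) :=
  fun f => lp.ext (funext fun a => by simp [he a])

end Reindex

theorem lp.norm_sq_eq_tsum {α : Type*} (f : lp (fun _ : α => ℝ) 2) :
    ‖f‖ ^ 2 = ∑' i, f i ^ 2 := by
  rw [← real_inner_self_eq_norm_sq, lp.inner_eq_tsum]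
  simp [sq]

theorem LinearIsometry.isSelfAdjoint_of_involutive {𝕜 H : Type*} [RCLike 𝕜]
    [NormedAddCommGroup H] [InnerProductSpace 𝕜 H] [CompleteSpace H] (U : H →ₗᵢ[𝕜] H)
    (hU : Function.Involutive U) : IsSelfAdjoint U.toContinuousLinearMap := by
  refine LinearMap.IsSymmetric.isSelfAdjoint fun x y => ?_
  change inner 𝕜 (U x) y = inner 𝕜 x (U y)
  conv_lhs => rw [← hU y, U.inner_map_map]

theorem ContinuousLinearMap.mem_spectrum_of_tendsto_norm {𝕜 F ι : Type*}
    [NontriviallyNormedField 𝕜] [NormedAddCommGroup F] [NormedSpace 𝕜 F]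
    {T : F →L[𝕜] F} {a : 𝕜} {l : Filter ι} [l.NeBot] {x : ι → F} {B : ℝ}
    (hres : ∀ i, ‖a • x i - T (x i)‖ ≤ B) (hx : Tendsto (fun i => ‖x i‖) l atTop) :
    a ∈ spectrum 𝕜 T := by
  by_contra hT
  obtain ⟨u, hu⟩ := spectrum.notMem_iff.1 hT
  set R : F →L[𝕜] F := ↑u⁻¹
  have hbdd : ∀ i, ‖x i‖ ≤ ‖R‖ * B := fun i => calc
    ‖x i‖ = ‖(R * ↑u) (x i)‖ := by rw [u.inv_mul]; rfl
    _ = ‖R (a • x i - T (x i))‖ := by simp [hu, Algebra.algebraMap_eq_smul_one]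
    _ ≤ ‖R‖ * B := (R.le_opNorm _).trans (by gcongr; exact hres i)
  obtain ⟨i, hi⟩ := (hx.eventually_gt_atTop (‖R‖ * B)).exists
  exact (hbdd i).not_gt hi

theorem one_sub_abs_cos_le_cos_sq_add_cos_sq (x θ : ℝ) :
    1 - |cos θ| ≤ cos x ^ 2 + cos (x + θ) ^ 2 := by
  have hsum : cos x ^ 2 + cos (x + θ) ^ 2 = 1 + cos (2 * x + θ) * cos θ := by
    rw [cos_sq x, cos_sq (x + θ), show 2 * x + θ = (2 * x + (2 * (x + θ))) / 2 by ring,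
      ← cos_neg θ, show -θ = (2 * x - 2 * (x + θ)) / 2 by ring]
    linarith [cos_add_cos (2 * x) (2 * (x + θ))]
  have hprod : |cos (2 * x + θ) * cos θ| ≤ |cos θ| := by
    rw [abs_mul]
    exact mul_le_of_le_one_left (abs_nonneg _) (abs_cos_le_one _)
  linarith [neg_abs_le (cos (2 * x + θ) * cos θ)]

local notation "ℓ²(ℤ)" => lp (fun _ : ℤ => ℝ) 2

def dihedralWalk : ℓ²(ℤ) →L[ℝ] ℓ²(ℤ) :=
  (2⁻¹ : ℝ) • ((lp.compEquiv ℝ (Equiv.subLeft (1 : ℤ))).toContinuousLinearMap +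
    (lp.compEquiv ℝ (Equiv.neg ℤ)).toContinuousLinearMap)

theorem dihedralWalk_apply (f : ℓ²(ℤ)) (n : ℤ) :
    dihedralWalk f n = (f (1 - n) + f (-n)) / 2 := by
  simp only [dihedralWalk, smul_apply, add_apply, lp.coeFn_smul, lp.coeFn_add, Pi.smul_apply,
    Pi.add_apply, smul_eq_mul, LinearIsometry.coe_toContinuousLinearMap, lp.compEquiv_apply,
    Equiv.subLeft_apply, Equiv.neg_apply]
  ring

theorem isSelfAdjoint_dihedralWalk : IsSelfAdjoint dihedralWalk := by
  have h₁ := LinearIsometry.isSelfAdjoint_of_involutive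
    (lp.compEquiv ℝ (Equiv.subLeft (1 : ℤ)) : ℓ²(ℤ) →ₗᵢ[ℝ] ℓ²(ℤ))
    (lp.compEquiv_involutive ℝ (sub_sub_cancel 1))
  have h₀ := LinearIsometry.isSelfAdjoint_of_involutive
    (lp.compEquiv ℝ (Equiv.neg ℤ) : ℓ²(ℤ) →ₗᵢ[ℝ] ℓ²(ℤ)) (lp.compEquiv_involutive ℝ neg_neg)
  unfold dihedralWalk
  exact IsSelfAdjoint.smul (IsSelfAdjoint.all (2⁻¹ : ℝ)) (h₁.add h₀)

theorem norm_dihedralWalk_le : ‖dihedralWalk‖ ≤ 1 := calc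
  ‖dihedralWalk‖ ≤ 2⁻¹ * (1 + 1) := by
    unfold dihedralWalk
    refine (norm_smul_le (2⁻¹ : ℝ) (_ : ℓ²(ℤ) →L[ℝ] ℓ²(ℤ))).trans ?_
    rw [norm_inv, Real.norm_two]
    gcongr
    exact (norm_add_le _ _).trans (add_le_add (LinearIsometry.norm_toContinuousLinearMap_le _)
      (LinearIsometry.norm_toContinuousLinearMap_le _))
  _ = 1 := by norm_num

theorem spectrum_dihedralWalk_subset : spectrum ℝ dihedralWalk ⊆ Set.Icc (-1) 1 := fun _ ha =>
  abs_le.1 <| (spectrum.norm_le_norm_mul_of_mem ha).trans <|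
    mul_le_one₀ norm_dihedralWalk_le (norm_nonneg _) ContinuousLinearMap.norm_id_le

/-- Along the path `0, 1, -1, 2, -2, …` the vertex `n` sits at position `|2n - 1/2| - 1/2`, so
this is the wave `cos ((position + 1/2) θ)`, symmetric about position `-1/2` as the loop at `0`
demands. -/
def dihedralWave (θ : ℝ) (n : ℤ) : ℝ := cos ((2 * n - 1 / 2) * θ)

theorem dihedralWave_eigen (θ : ℝ) (n : ℤ) :
    (dihedralWave θ (1 - n) + dihedralWave θ (-n)) / 2 = cos θ * dihedralWave θ n := by
  simp only [dihedralWave, cos_add_cos, Int.cast_sub, Int.cast_one, Int.cast_neg]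
  rw [← cos_neg ((2 * n - 1 / 2) * θ)]
  ring_nf

theorem le_sum_dihedralWave_sq (θ : ℝ) (k : ℕ) :
    k * (1 - |cos θ|) ≤ ∑ n ∈ Finset.Icc (-k : ℤ) k, dihedralWave θ n ^ 2 := by
  induction k with
  | zero => simp [sq_nonneg]
  | succ k ih =>
    have hIcc : Finset.Icc (-((k + 1 : ℕ) : ℤ)) (k + 1 : ℕ) =
        insert (-((k + 1 : ℕ) : ℤ)) (insert ((k + 1 : ℕ) : ℤ) (Finset.Icc (-k : ℤ) k)) := by
      ext n; simp only [Finset.mem_insert, Finset.mem_Icc]; omega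
    set x : ℝ := (2 * (k + 1 : ℕ) - 1 / 2) * θ
    have hpos : dihedralWave θ (k + 1 : ℕ) = cos x := by simp [x, dihedralWave]
    have hneg : dihedralWave θ (-(k + 1 : ℕ)) = cos (x + θ) := by
      rw [dihedralWave, ← cos_neg]; push_cast [x]; ring_nf
    rw [hIcc, Finset.sum_insert (by simp; omega), Finset.sum_insert (by simp), hpos, hneg]
    push_cast
    linarith [one_sub_abs_cos_le_cos_sq_add_cos_sq x θ]

def truncatedWave (θ : ℝ) (k : ℕ) : ℓ²(ℤ) :=
  ⟨(Finset.Icc (-k : ℤ) k : Set ℤ).indicator (dihedralWave θ),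
    (memℓp_zero ((Finset.Icc (-k : ℤ) k).finite_toSet.subset
      fun _ => Set.mem_of_indicator_ne_zero)).of_exponent_ge zero_le⟩

theorem truncatedWave_apply (θ : ℝ) (k : ℕ) (n : ℤ) :
    truncatedWave θ k n = if -(k : ℤ) ≤ n ∧ n ≤ k then dihedralWave θ n else 0 := by
  simp [truncatedWave, Set.indicator_apply]

theorem abs_truncatedWave_le (θ : ℝ) (k : ℕ) (n : ℤ) : |truncatedWave θ k n| ≤ 1 := by
  rw [truncatedWave_apply]
  split_ifs
  · exact abs_cos_le_one _
  · simp

theorem norm_truncatedWave_sq (θ : ℝ) (k : ℕ) :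
    ‖truncatedWave θ k‖ ^ 2 = ∑ n ∈ Finset.Icc (-k : ℤ) k, dihedralWave θ n ^ 2 := by
  rw [lp.norm_sq_eq_tsum, tsum_eq_sum (s := Finset.Icc (-k : ℤ) k)]
  · refine Finset.sum_congr rfl fun n hn => ?_
    rw [truncatedWave_apply, if_pos (Finset.mem_Icc.1 hn)]
  · intro n hn
    rw [truncatedWave_apply, if_neg (by simpa using hn), zero_pow two_ne_zero]

theorem tendsto_norm_truncatedWave {θ : ℝ} (hθ : |cos θ| < 1) :
    Tendsto (fun k => ‖truncatedWave θ k‖) atTop atTop := by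
  refine tendsto_atTop_mono (fun k => ?_) <| tendsto_sqrt_atTop.comp <|
    tendsto_natCast_atTop_atTop.atTop_mul_const (sub_pos.2 hθ)
  rw [Function.comp_apply, ← sqrt_sq (norm_nonneg (truncatedWave θ k)), norm_truncatedWave_sq]
  exact sqrt_le_sqrt (le_sum_dihedralWave_sq θ k)

theorem dihedralWalk_truncatedWave_residual_eq_zero (θ : ℝ) (k : ℕ) {n : ℤ}
    (hn : n ≠ -k) (hn' : n ≠ k + 1) :
    (cos θ • truncatedWave θ k - dihedralWalk (truncatedWave θ k)) n = 0 := by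
  rw [lp.coeFn_sub, lp.coeFn_smul, Pi.sub_apply, Pi.smul_apply, smul_eq_mul, dihedralWalk_apply,
    truncatedWave_apply, truncatedWave_apply, truncatedWave_apply]
  by_cases hin : -(k : ℤ) ≤ n ∧ n ≤ k
  · rw [if_pos hin, if_pos (by omega), if_pos (by omega), dihedralWave_eigen, sub_self]
  · rw [if_neg hin, if_neg (by omega), if_neg (by omega)]
    ring

theorem abs_dihedralWalk_truncatedWave_residual_le (θ : ℝ) (k : ℕ) (n : ℤ) :
    |(cos θ • truncatedWave θ k - dihedralWalk (truncatedWave θ k)) n| ≤ 2 := by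
  rw [lp.coeFn_sub, lp.coeFn_smul, Pi.sub_apply, Pi.smul_apply, smul_eq_mul, dihedralWalk_apply]
  have hc := abs_cos_le_one θ
  have h₀ := abs_truncatedWave_le θ k n
  have h₁ := abs_truncatedWave_le θ k (1 - n)
  have h₂ := abs_truncatedWave_le θ k (-n)
  rw [abs_le] at hc h₀ h₁ h₂ ⊢
  constructor <;> nlinarith

theorem norm_dihedralWalk_truncatedWave_residual_le (θ : ℝ) (k : ℕ) :
    ‖cos θ • truncatedWave θ k - dihedralWalk (truncatedWave θ k)‖ ≤ 3 := by
  set g := cos θ • truncatedWave θ k - dihedralWalk (truncatedWave θ k)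
  have hsq : ‖g‖ ^ 2 = g (-k) ^ 2 + g (k + 1) ^ 2 := by
    rw [lp.norm_sq_eq_tsum, tsum_eq_sum (s := ({-(k : ℤ), (k : ℤ) + 1} : Finset ℤ)),
      Finset.sum_pair (by omega)]
    intro n hn
    simp only [Finset.mem_insert, Finset.mem_singleton, not_or] at hn
    rw [dihedralWalk_truncatedWave_residual_eq_zero θ k hn.1 hn.2, zero_pow two_ne_zero]
  have h₁ := abs_dihedralWalk_truncatedWave_residual_le θ k (-k)
  have h₂ := abs_dihedralWalk_truncatedWave_residual_le θ k (k + 1)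
  nlinarith [sq_abs (g (-k)), sq_abs (g (k + 1)), abs_nonneg (g (-k)), abs_nonneg (g (k + 1)),
    norm_nonneg g]

theorem mem_spectrum_dihedralWalk {a : ℝ} (ha : |a| < 1) : a ∈ spectrum ℝ dihedralWalk := by
  have hcos : cos (arccos a) = a := cos_arccos (abs_le.1 ha.le).1 (abs_le.1 ha.le).2
  rw [← hcos] at ha ⊢
  exact ContinuousLinearMap.mem_spectrum_of_tendsto_norm
    (norm_dihedralWalk_truncatedWave_residual_le _) (tendsto_norm_truncatedWave ha)

theorem spectrum_dihedralWalk : spectrum ℝ dihedralWalk = Set.Icc (-1) 1 := by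
  refine spectrum_dihedralWalk_subset.antisymm ?_
  rw [← closure_Ioo (by norm_num : (-1 : ℝ) ≠ 1)]
  exact closure_minimal (fun a ha => mem_spectrum_dihedralWalk (abs_lt.2 ha))
    (spectrum.isClosed _)

end

/-- The random walk operator `M` on `ℓ²(ℤ)` of the Schreier graph of the action of the
infinite dihedral group on `ℤ` (generators acting by `n ↦ 1 − n` and `n ↦ −n`), given by
`(M f)(n) = (f(1 − n) + f(−n))/2`, is self-adjoint and its real spectrum is `[−1, 1]`. -/
theorem dihedral_boundary_spectrum
    (M : lp (fun _ : ℤ => ℝ) 2 →L[ℝ] lp (fun _ : ℤ => ℝ) 2)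
    (hM : ∀ (f : lp (fun _ : ℤ => ℝ) 2) (n : ℤ), M f n = (f (1 - n) + f (-n)) / 2) :
    IsSelfAdjoint M ∧ spectrum ℝ M = Set.Icc (-1 : ℝ) 1 := by
  obtain rfl : M = dihedralWalk :=
    ContinuousLinearMap.ext fun f => lp.ext <| funext fun n => by rw [hM, dihedralWalk_apply]
  exact ⟨isSelfAdjoint_dihedralWalk, spectrum_dihedralWalk⟩
end

section
/- With the 2^n × 2^n matrices a_n, b_n, c_n, d_n of the first Grigorchuk group, define for real x, y the matrix D_n(x,y) = a_n + b_n + c_n + d_n − (1+x)·I + (y−1)·a_n. Then for every n ≥ 2 and all real x, y with x² ≠ 4: det D_n(x,y) = (x² − 4)^(2^(n−2)) · det D_{n−1}(F(x,y)), where F : ℝ² → ℝ² is F(x,y) = (x − x y²/(x² − 4), 2y²/(x² − 4)). -/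
/-!
Split level `n + 1` of the tree into its two subtrees. In block form
`D_{n+1}(x,y) = [[2a_n - x, y], [y, b_n + c_n + d_n - (1 + x)]]`. As `a_n` is an involution,
`(2a_n - x)(2a_n + x) = 4 - x²`, so for `x² ≠ 4` the Schur complement of the top-left block is
`b_n + c_n + d_n - (1 + x) - y² (2a_n + x) / (4 - x²)`, which is exactly `D_n(F(x,y))`.
For `n ≥ 1` the involution `a_n` swaps the two halves of level `n`, which makes
`det (2a_n - x) = det ((2 - x) I) · det ((-2 - x) I) = (x² - 4)^(2^(n-1))`.
-/

open Matrix

/-- `Fin (2^n) ⊕ Fin (2^n) ≃ Fin (2^(n+1))`, used to assemble block matrices. -/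
def finEquiv2 (n : ℕ) : Fin (2 ^ n) ⊕ Fin (2 ^ n) ≃ Fin (2 ^ (n + 1)) :=
  finSumFinEquiv.trans (finCongr (by ring))

/-- The matrices `(a_n, b_n, c_n, d_n)` by which the four generators of the first Grigorchuk
group act on level `n` of the binary rooted tree. -/
noncomputable def grigGen : (n : ℕ) →
    Matrix (Fin (2 ^ n)) (Fin (2 ^ n)) ℝ × Matrix (Fin (2 ^ n)) (Fin (2 ^ n)) ℝ ×
      Matrix (Fin (2 ^ n)) (Fin (2 ^ n)) ℝ × Matrix (Fin (2 ^ n)) (Fin (2 ^ n)) ℝ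
  | 0 => (1, 1, 1, 1)
  | n + 1 =>
    let p := grigGen n
    (Matrix.reindex (finEquiv2 n) (finEquiv2 n) (Matrix.fromBlocks 0 1 1 0),
     Matrix.reindex (finEquiv2 n) (finEquiv2 n) (Matrix.fromBlocks p.1 0 0 p.2.2.1),
     Matrix.reindex (finEquiv2 n) (finEquiv2 n) (Matrix.fromBlocks p.1 0 0 p.2.2.2),
     Matrix.reindex (finEquiv2 n) (finEquiv2 n) (Matrix.fromBlocks 1 0 0 p.2.1))

/-- The auxiliary two-parameter pencil
`D_n(x,y) = a_n + b_n + c_n + d_n − (1+x)·I + (y−1)·a_n`. -/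
noncomputable def grigPencil (n : ℕ) (x y : ℝ) : Matrix (Fin (2 ^ n)) (Fin (2 ^ n)) ℝ :=
  (grigGen n).1 + (grigGen n).2.1 + (grigGen n).2.2.1 + (grigGen n).2.2.2 -
    (1 + x) • (1 : Matrix (Fin (2 ^ n)) (Fin (2 ^ n)) ℝ) + (y - 1) • (grigGen n).1

namespace Matrix

variable {m R : Type*} [Fintype m] [DecidableEq m]

/- Block elimination `[[1,0],[-1,1]] · [[A,B],[B,A]] · [[1,0],[1,1]] = [[A+B,B],[0,A-B]]` by
unitriangular factors, so neither commutativity nor invertibility is needed. -/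
theorem det_fromBlocks_eq_det_add_mul_det_sub [CommRing R] (A B : Matrix m m R) :
    (fromBlocks A B B A).det = (A + B).det * (A - B).det := by
  have hL : (fromBlocks 1 0 (-1) 1 : Matrix (m ⊕ m) (m ⊕ m) R).det = 1 := by simp
  have hU : (fromBlocks 1 0 1 1 : Matrix (m ⊕ m) (m ⊕ m) R).det = 1 := by simp
  have hLMU : fromBlocks 1 0 (-1) 1 * fromBlocks A B B A * fromBlocks 1 0 1 1 =
      fromBlocks (A + B) B 0 (A - B) := by
    simp only [fromBlocks_multiply, Matrix.one_mul, Matrix.zero_mul, Matrix.neg_mul,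
      Matrix.mul_one, Matrix.mul_zero, add_zero, zero_add, fromBlocks_inj]
    exact ⟨trivial, trivial, by abel, by abel⟩
  have := congrArg det hLMU
  rwa [det_mul, det_mul, hL, hU, one_mul, mul_one, det_fromBlocks_zero₂₁] at this

theorem det_fromBlocks_smul_one_smul_one [Field R] (A A' D : Matrix m m R) {c : R} (hc : c ≠ 0)
    (hA : A * A' = c • 1) (y : R) :
    (fromBlocks A (y • 1) (y • 1) D).det = A.det * (D - (y ^ 2 / c) • A').det := by
  let : Invertible A := invertibleOfRightInverse A (c⁻¹ • A')
    (by rw [Matrix.mul_smul, hA, smul_smul, inv_mul_cancel₀ hc, one_smul])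
  rw [det_fromBlocks₁₁, show ⅟A = c⁻¹ • A' from rfl]
  congr 2
  simp only [Matrix.smul_mul, Matrix.mul_smul, Matrix.one_mul, Matrix.mul_one, smul_smul]
  congr 3
  ring

end Matrix

theorem two_smul_sub_mul_two_smul_add {R A : Type*} [CommRing R] [Ring A] [Algebra R A]
    {a : A} (ha : a * a = 1) (x : R) :
    ((2 : R) • a - x • 1) * ((2 : R) • a + x • 1) = (4 - x ^ 2) • 1 := by
  simp only [sub_mul, mul_add, smul_mul_smul_comm, ha, mul_one, one_mul]
  match_scalars <;> ring

theorem grigGen_succ (n : ℕ) :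
    grigGen (n + 1) =
      (reindexAlgEquiv ℝ ℝ (finEquiv2 n) (fromBlocks 0 1 1 0),
       reindexAlgEquiv ℝ ℝ (finEquiv2 n) (fromBlocks (grigGen n).1 0 0 (grigGen n).2.2.1),
       reindexAlgEquiv ℝ ℝ (finEquiv2 n) (fromBlocks (grigGen n).1 0 0 (grigGen n).2.2.2),
       reindexAlgEquiv ℝ ℝ (finEquiv2 n) (fromBlocks 1 0 0 (grigGen n).2.1)) := rfl

theorem grigGen_fst_mul_self (n : ℕ) : (grigGen n).1 * (grigGen n).1 = 1 := by
  cases n with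
  | zero => simp [grigGen]
  | succ n =>
    rw [grigGen_succ, ← map_mul, fromBlocks_multiply]
    simp [fromBlocks_one]

theorem grigPencil_succ (n : ℕ) (x y : ℝ) :
    grigPencil (n + 1) x y = reindexAlgEquiv ℝ ℝ (finEquiv2 n)
      (fromBlocks ((2 : ℝ) • (grigGen n).1 - x • 1) (y • 1) (y • 1)
        ((grigGen n).2.1 + (grigGen n).2.2.1 + (grigGen n).2.2.2 - (1 + x) • 1)) := by
  rw [grigPencil, grigGen_succ, ← map_one (reindexAlgEquiv ℝ ℝ (finEquiv2 n))]
  rw [← map_add, ← map_add, ← map_add, ← map_smul, ← map_sub, ← map_smul, ← map_add]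
  congr 1
  simp only [← fromBlocks_one, fromBlocks_smul, sub_eq_add_neg, fromBlocks_neg, fromBlocks_add,
    fromBlocks_inj]
  refine ⟨?_, ?_, ?_, ?_⟩ <;> module

theorem det_two_smul_grigGen_fst_succ_sub (n : ℕ) (x : ℝ) :
    ((2 : ℝ) • (grigGen (n + 1)).1 - x • 1).det = (x ^ 2 - 4) ^ 2 ^ n := by
  have hblocks : (2 : ℝ) • fromBlocks 0 1 1 0 -
        x • (1 : Matrix (Fin (2 ^ n) ⊕ Fin (2 ^ n)) (Fin (2 ^ n) ⊕ Fin (2 ^ n)) ℝ) =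
      fromBlocks ((-x) • 1) ((2 : ℝ) • 1) ((2 : ℝ) • 1) ((-x) • 1) := by
    simp only [← fromBlocks_one, fromBlocks_smul, sub_eq_add_neg, fromBlocks_neg, fromBlocks_add,
      fromBlocks_inj]
    refine ⟨?_, ?_, ?_, ?_⟩ <;> module
  rw [grigGen_succ, ← map_one (reindexAlgEquiv ℝ ℝ (finEquiv2 n)), ← map_smul, ← map_smul,
    ← map_sub, coe_reindexAlgEquiv, det_reindex_self, hblocks,
    det_fromBlocks_eq_det_add_mul_det_sub, ← add_smul, ← sub_smul, det_smul, det_smul, det_one,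
    Fintype.card_fin, mul_one, mul_one, ← mul_pow]
  ring_nf

theorem schurComplement_eq_grigPencil (n : ℕ) (x y : ℝ) :
    (grigGen n).2.1 + (grigGen n).2.2.1 + (grigGen n).2.2.2 - (1 + x) • 1 -
        (y ^ 2 / (4 - x ^ 2)) • ((2 : ℝ) • (grigGen n).1 + x • 1) =
      grigPencil n (x - x * y ^ 2 / (x ^ 2 - 4)) (2 * y ^ 2 / (x ^ 2 - 4)) := by
  have ht : y ^ 2 / (4 - x ^ 2) = -(y ^ 2 / (x ^ 2 - 4)) := by rw [← div_neg, neg_sub]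
  rw [grigPencil, ht, mul_div_assoc, mul_div_assoc]
  match_scalars <;> ring

/-- For `n ≥ 2` and `x² ≠ 4`:
`det D_n(x,y) = (x² − 4)^(2^(n−2)) · det D_{n−1}(F(x,y))` where
`F(x,y) = (x − xy²/(x² − 4), 2y²/(x² − 4))`. -/
theorem grigorchuk_det_recursion (n : ℕ) (hn : 2 ≤ n) (x y : ℝ) (hx : x ^ 2 ≠ 4) :
    (grigPencil n x y).det =
      (x ^ 2 - 4) ^ 2 ^ (n - 2) *
        (grigPencil (n - 1) (x - x * y ^ 2 / (x ^ 2 - 4)) (2 * y ^ 2 / (x ^ 2 - 4))).det := by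
  obtain ⟨k, rfl⟩ : ∃ k, n = k + 2 := ⟨n - 2, by omega⟩
  have hc : (4 : ℝ) - x ^ 2 ≠ 0 := sub_ne_zero.mpr (Ne.symm hx)
  rw [grigPencil_succ, coe_reindexAlgEquiv, det_reindex_self,
    det_fromBlocks_smul_one_smul_one _ _ _ hc
      (two_smul_sub_mul_two_smul_add (grigGen_fst_mul_self _) x),
    det_two_smul_grigGen_fst_succ_sub, schurComplement_eq_grigPencil]
  rfl
end

section
/- Let f : ℝ → ℝ be the polynomial map f(x) = x² − x − 3, let F : ℝ² → ℝ² be F(x,y) = ( x + 2y²(−x² + x + y²)/((x − 1 − y)(x² − 1 + y − y²)), y²(x − 1 + y)/((x − 1 − y)(x² − 1 + y − y²)) ), and let ψ(x,y) = (x² − 1 − xy − 2y²)/y. Then for all real x, y with y ≠ 0, x − 1 − y ≠ 0, x − 1 + y ≠ 0, and x² − 1 + y − y² ≠ 0: ψ(F(x,y)) = f(ψ(x,y)); that is, ψ semi-conjugates the two-dimensional rational map F to the one-dimensional polynomial map f. -/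
/-- The map `ψ(x,y) = (x² − 1 − xy − 2y²)/y` semi-conjugates the two-dimensional rational map
`F(x,y) = (x + 2y²(−x² + x + y²)/((x − 1 − y)(x² − 1 + y − y²)),
           y²(x − 1 + y)/((x − 1 − y)(x² − 1 + y − y²)))`
to the one-dimensional polynomial map `f(x) = x² − x − 3`: for all real `x, y` with `y ≠ 0`,
`x − 1 − y ≠ 0`, `x − 1 + y ≠ 0` and `x² − 1 + y − y² ≠ 0`, `ψ(F(x,y)) = f(ψ(x,y))`. -/
theorem psi_semiconjugates_F_to_f_hanoi (x y : ℝ) (hy : y ≠ 0) (h1 : x - 1 - y ≠ 0)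
    (h2 : x - 1 + y ≠ 0) (h3 : x ^ 2 - 1 + y - y ^ 2 ≠ 0) :
    (let f : ℝ → ℝ := fun t => t ^ 2 - t - 3
     let F : ℝ × ℝ → ℝ × ℝ := fun p =>
       (p.1 + 2 * p.2 ^ 2 * (-p.1 ^ 2 + p.1 + p.2 ^ 2) /
           ((p.1 - 1 - p.2) * (p.1 ^ 2 - 1 + p.2 - p.2 ^ 2)),
        p.2 ^ 2 * (p.1 - 1 + p.2) / ((p.1 - 1 - p.2) * (p.1 ^ 2 - 1 + p.2 - p.2 ^ 2)))
     let ψ : ℝ × ℝ → ℝ := fun p => (p.1 ^ 2 - 1 - p.1 * p.2 - 2 * p.2 ^ 2) / p.2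
     ψ (F (x, y)) = f (ψ (x, y))) := by
  intro f F ψ
  have hF₂ : (F (x, y)).2 ≠ 0 :=
    div_ne_zero (mul_ne_zero (pow_ne_zero 2 hy) h2) (mul_ne_zero h1 h3)
  simp only [ψ, f, F] at hF₂ ⊢
  field_simp
  ring
end
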